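/- arXiv:0908.1808 — 6 statements merged into one kernel-verified Lean document; each statement's English description precedes it below -/
import Mathlib

section
/- Let G be a nilpotent group, let w and γ be elements of G, and let H₂ be the normal closure of w in G. Then the normal closure of the single element w·[w, γwγ⁻¹] in G equals the normal closure of w in G. (Here [x,y] = xyx⁻¹y⁻¹.) -/
/-!
Modulo the normal closure `N` of `u = w⁅w, γwγ⁻¹⁆`, the image of `w` equals the inverse of a
commutator of two elements of its own normal closure `M`, so `M ≤ ⁅M, M⁆`. A perfect subgroup
of a nilpotent group is trivial, hence `w ∈ N`; the other inclusion is clear since `u` is built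
from conjugates of `w`.
-/

open scoped commutatorElement

namespace Subgroup

variable {G : Type*} [Group G]

theorem eq_bot_of_le_commutator_self [Group.IsNilpotent G] {H : Subgroup G}
    (h : H ≤ ⁅H, H⁆) : H = ⊥ := by
  have hcomm : ⁅H, H⁆ ≤ H := commutator_le.mpr fun _ h₁ _ h₂ ↦
    H.mul_mem (H.mul_mem (H.mul_mem h₁ h₂) (H.inv_mem h₁)) (H.inv_mem h₂)
  have : Group.IsPerfect H := isPerfect_iff.mpr (hcomm.antisymm h)
  by_contra hH
  have : Nontrivial H := (nontrivial_iff_ne_bot H).mpr hH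
  exact Group.IsPerfect.not_isNilpotent H inferInstance

theorem conj_mem_normalClosure_singleton (w γ : G) :
    γ * w * γ⁻¹ ∈ normalClosure {w} :=
  normalClosure_normal.conj_mem w (subset_normalClosure (Set.mem_singleton _)) γ

theorem normalClosure_mul_commutator_conj_le (w γ : G) :
    normalClosure {w * ⁅w, γ * w * γ⁻¹⁆} ≤ normalClosure {w} := by
  have hw : w ∈ normalClosure {w} := subset_normalClosure (Set.mem_singleton _)
  have hc := conj_mem_normalClosure_singleton w γ
  refine normalClosure_le_normal (Set.singleton_subset_iff.mpr (mul_mem hw ?_))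
  exact commutator_le_left _ _ (commutator_mem_commutator hw hc)

theorem normalClosure_singleton_le_commutator_of_mul_commutator_conj_eq_one {w γ : G}
    (h : w * ⁅w, γ * w * γ⁻¹⁆ = 1) :
    normalClosure {w} ≤ ⁅normalClosure {w}, normalClosure {w}⁆ := by
  have hw : w = ⁅w, γ * w * γ⁻¹⁆⁻¹ := eq_inv_of_mul_eq_one_left h
  have hinv : ⁅w, γ * w * γ⁻¹⁆⁻¹ ∈ ⁅normalClosure {w}, normalClosure {w}⁆ :=
    inv_mem (commutator_mem_commutator (subset_normalClosure (Set.mem_singleton _))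
      (conj_mem_normalClosure_singleton w γ))
  refine normalClosure_le_normal (Set.singleton_subset_iff.mpr ?_)
  rwa [← hw] at hinv

theorem eq_one_of_mul_commutator_conj_eq_one [Group.IsNilpotent G] {w γ : G}
    (h : w * ⁅w, γ * w * γ⁻¹⁆ = 1) : w = 1 := by
  have hbot := eq_bot_of_le_commutator_self
    (normalClosure_singleton_le_commutator_of_mul_commutator_conj_eq_one h)
  simpa using normalClosure_eq_bot_iff.mp hbot

end Subgroup

open Subgroup in
theorem stmt_1 {G : Type*} [Group G] [Group.IsNilpotent G] (w γ : G) :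
    Subgroup.normalClosure {w * ⁅w, γ * w * γ⁻¹⁆} = Subgroup.normalClosure {w} := by
  let N := normalClosure {w * ⁅w, γ * w * γ⁻¹⁆}
  refine (normalClosure_mul_commutator_conj_le w γ).antisymm
    (normalClosure_le_normal (Set.singleton_subset_iff.mpr ?_))
  let π : G →* G ⧸ N := QuotientGroup.mk' N
  have hu : π (w * ⁅w, γ * w * γ⁻¹⁆) = 1 :=
    (QuotientGroup.eq_one_iff _).mpr (subset_normalClosure (Set.mem_singleton _))
  rw [map_mul, map_commutatorElement, map_mul, map_mul, map_inv] at hu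
  exact (QuotientGroup.eq_one_iff w).mp (eq_one_of_mul_commutator_conj_eq_one hu)
end

section
/- Let G and H be groups with G finitely generated and nilpotent, and suppose φ : G → H and ψ : H → G are surjective group homomorphisms. Then φ is an isomorphism. -/
/-!
Write `γ n` for the lower central series of `G` and suppose `γ (c + 1) = 1`. If `G` is generated
by a finite set `S` and `γ n` is generated modulo `γ (n + 1)` by a finite set `T`, then `γ (n + 1)`
is generated modulo `γ (n + 2)` by the commutators `⁅t, s⁆`; hence the central subgroup `γ c` is a
finitely generated abelian group. A surjective endomorphism `f` of `G` maps every `γ n` onto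
itself, so it induces surjective endomorphisms of `γ c`, a Noetherian `ℤ`-module, and of
`G ⧸ γ c`, which has smaller nilpotency class. Both are injective (the second by induction on
`c`), so `f` is. Applied to `ψ ∘ φ`, this shows that `φ` is injective.
-/

open Subgroup
open scoped commutatorElement

section LowerCentralSeries

variable {G : Type*} [Group G]

theorem Subgroup.top_lowerCentralSeries_map_of_surjective {G' : Type*} [Group G'] {f : G →* G'}
    (hf : Function.Surjective f) (n : ℕ) :
    ((⊤ : Subgroup G).lowerCentralSeries n).map f = (⊤ : Subgroup G').lowerCentralSeries n := by
  rw [map_lowerCentralSeries, map_top_of_surjective f hf]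

theorem Subgroup.commutator_closure_le {M : Subgroup G} [M.Normal] {S T : Set G}
    (h : ∀ s ∈ S, ∀ t ∈ T, ⁅s, t⁆ ∈ M) : ⁅closure S, closure T⁆ ≤ M := by
  rw [← QuotientGroup.ker_mk' M, ← map_eq_bot_iff, map_commutator, MonoidHom.map_closure,
    MonoidHom.map_closure, commutator_eq_bot_iff_le_centralizer, centralizer_closure,
    closure_le]
  rintro _ ⟨s, hs, rfl⟩ _ ⟨t, ht, rfl⟩
  refine (commutatorElement_eq_one_iff_mul_comm.mp ?_).symm
  rw [← map_commutatorElement, QuotientGroup.mk'_apply, QuotientGroup.eq_one_iff]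
  exact h s hs t ht

theorem Subgroup.top_lowerCentralSeries_succ_eq_closure_sup {S : Set G} (hS : closure S = ⊤)
    {n : ℕ} {T : Set G}
    (hT : (⊤ : Subgroup G).lowerCentralSeries n =
      closure T ⊔ (⊤ : Subgroup G).lowerCentralSeries (n + 1)) :
    (⊤ : Subgroup G).lowerCentralSeries (n + 1) =
      closure (Set.image2 (⁅·, ·⁆) T S) ⊔
        (⊤ : Subgroup G).lowerCentralSeries (n + 2) := by
  set γ := (⊤ : Subgroup G).lowerCentralSeries
  set M := closure (Set.image2 (⁅·, ·⁆) T S) ⊔ γ (n + 2)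
  have hT_le : closure T ≤ γ n := hT ▸ le_sup_left
  have hM_le : M ≤ γ (n + 1) := by
    refine sup_le (closure_le _ |>.mpr ?_) (lowerCentralSeries_antitone _ (n + 1).le_succ)
    rintro _ ⟨t, ht, s, -, rfl⟩
    exact commutator_mem_commutator (hT_le (subset_closure ht)) (mem_top s)
  have : M.Normal :=
    commutator_top_right_le_iff.mp ((commutator_mono hM_le le_rfl).trans le_sup_right)
  refine le_antisymm ?_ hM_le
  calc γ (n + 1) = ⁅closure (T ∪ γ (n + 1)), closure S⁆ := by
        rw [hS, closure_union, closure_eq, ← hT]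
        rfl
    _ ≤ M := by
      refine commutator_closure_le fun x hx s hs => ?_
      rcases hx with hx | hx
      · exact le_sup_left (α := Subgroup G) (subset_closure ⟨x, hx, s, hs, rfl⟩)
      · exact le_sup_right (α := Subgroup G) (commutator_mem_commutator hx (mem_top s))

theorem Subgroup.exists_finite_top_lowerCentralSeries_eq_closure_sup [Group.FG G] (n : ℕ) :
    ∃ T : Set G, T.Finite ∧ (⊤ : Subgroup G).lowerCentralSeries n =
      closure T ⊔ (⊤ : Subgroup G).lowerCentralSeries (n + 1) := by
  obtain ⟨S, hS, hSfin⟩ := Group.fg_iff.mp ‹Group.FG G›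
  induction n with
  | zero => exact ⟨S, hSfin, by rw [lowerCentralSeries_zero, hS, top_sup_eq]⟩
  | succ n ih =>
    obtain ⟨T, hTfin, hT⟩ := ih
    exact ⟨_, hTfin.image2 _ hSfin, top_lowerCentralSeries_succ_eq_closure_sup hS hT⟩

theorem Subgroup.fg_top_lowerCentralSeries_of_succ_eq_bot [Group.FG G] {n : ℕ}
    (h : (⊤ : Subgroup G).lowerCentralSeries (n + 1) = ⊥) :
    ((⊤ : Subgroup G).lowerCentralSeries n).FG := by
  obtain ⟨T, hTfin, hT⟩ := exists_finite_top_lowerCentralSeries_eq_closure_sup (G := G) n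
  exact (fg_iff _).mpr ⟨T, by rw [hT, h, sup_bot_eq], hTfin⟩

end LowerCentralSeries

theorem IsMulCommutative.injective_of_surjective_endomorphism {A : Type*} [Group A]
    [IsMulCommutative A] [Group.FG A] {f : A →* A} (hf : Function.Surjective f) :
    Function.Injective f := by
  open IsMulCommutative in
  let g := (MonoidHom.toAdditive f).toIntLinearMap
  have : Module.Finite ℤ (Additive A) :=
    Module.Finite.iff_addGroup_fg.mpr (GroupFG.iff_add_fg.mp ‹_›)
  exact IsNoetherian.injective_of_surjective_endomorphism g hf

theorem Group.injective_of_surjective_endomorphism_of_lowerCentralSeries_eq_bot (c : ℕ) :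
    ∀ {G : Type*} [Group G] [Group.FG G], (⊤ : Subgroup G).lowerCentralSeries c = ⊥ →
      ∀ {f : G →* G}, Function.Surjective f → Function.Injective f := by
  induction c with
  | zero =>
    intro G _ _ hc f _
    exact (injective_iff_map_eq_one f).mpr fun x _ => mem_bot.mp (hc ▸ mem_top x)
  | succ c ih =>
    intro G _ _ hc f hf
    set N := (⊤ : Subgroup G).lowerCentralSeries c
    have hfN : N.map f = N := top_lowerCentralSeries_map_of_surjective hf c
    have hNf : N ≤ N.comap f := map_le_iff_le_comap.mp hfN.le
    have hker : f.ker ≤ N := by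
      have hQ : (⊤ : Subgroup (G ⧸ N)).lowerCentralSeries c = ⊥ := by
        rw [← top_lowerCentralSeries_map_of_surjective (QuotientGroup.mk'_surjective N),
          Subgroup.map_eq_bot_iff, QuotientGroup.ker_mk']
      have hinj := ih hQ (QuotientGroup.map_surjective_of_surjective (N := N) N f
        (QuotientGroup.mk_surjective.comp hf) hNf)
      intro x hx
      rw [← QuotientGroup.eq_one_iff]
      exact (injective_iff_map_eq_one _).mp hinj _ (by simp [f.mem_ker.mp hx])
    have hN_center : N ≤ center G := commutator_top_right_eq_bot_iff_le_center.mp hc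
    have : IsMulCommutative N :=
      ⟨⟨fun a b => Subtype.ext (mem_center_iff.mp (hN_center b.2) a)⟩⟩
    have : Group.FG N :=
      (Group.fg_iff_subgroup_fg N).mpr (fg_top_lowerCentralSeries_of_succ_eq_bot hc)
    have hinjN := IsMulCommutative.injective_of_surjective_endomorphism
      (f := (MulEquiv.subgroupCongr hfN).toMonoidHom.comp (f.subgroupMap N))
      ((MulEquiv.subgroupCongr hfN).surjective.comp (f.subgroupMap_surjective N))
    refine (injective_iff_map_eq_one f).mpr fun x hx => ?_
    exact congrArg Subtype.val
      ((injective_iff_map_eq_one _).mp hinjN ⟨x, hker hx⟩ (Subtype.ext hx))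

theorem Group.IsNilpotent.injective_of_surjective_endomorphism {G : Type*} [Group G] [Group.FG G]
    [Group.IsNilpotent G] {f : G →* G} (hf : Function.Surjective f) : Function.Injective f := by
  obtain ⟨c, hc⟩ := Subgroup.nilpotent_iff_lowerCentralSeries.mp ‹Group.IsNilpotent G›
  exact Group.injective_of_surjective_endomorphism_of_lowerCentralSeries_eq_bot c hc hf

theorem stmt_2 {G H : Type*} [Group G] [Group H] [Group.FG G] [Group.IsNilpotent G]
    (φ : G →* H) (ψ : H →* G)
    (hφ : Function.Surjective φ) (hψ : Function.Surjective ψ) :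
    Function.Bijective φ :=
  ⟨.of_comp (f := ψ) (Group.IsNilpotent.injective_of_surjective_endomorphism
    (f := ψ.comp φ) (hψ.comp hφ)), hφ⟩
end

section
/- Every finitely generated nilpotent group is Hopfian, i.e., every surjective group endomorphism of a finitely generated nilpotent group is injective. -/
open Subgroup
open scoped commutatorElement

/-!
A finitely generated nilpotent group is Noetherian (all its subgroups are finitely generated), and
a Noetherian group is Hopfian: for a surjection `f`, the kernels of the iterates `f^[n]` form an
ascending chain, which stabilises at some `N`; an element `x = f^[N] y` of `ker f` then has
`y ∈ ker f^[N+1] = ker f^[N]`, so `x = 1`.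

Being Noetherian passes to extensions, so it follows by induction on the nilpotency class. If
`γₙ₊₁ = 1`, the last term `Z = γₙ` of the lower central series is central, `G ⧸ Z` is Noetherian by
induction, and `Z = ⁅γₙ₋₁, G⁆` is finitely generated abelian: the commutator map is
bimultiplicative with central values and kills `Z`, so `Z` is generated by the commutators of
finitely many lifts of generators of `γₙ₋₁ ⧸ Z` with finitely many generators of `G`.
-/

universe u

def Group.IsNoetherian (G : Type*) [Group G] : Prop :=
  ∀ H : Subgroup G, H.FG

section Commutator

variable {G : Type*} [Group G]

theorem commutatorElement_mul_left_of_mem_center {a b c : G} (h : ⁅b, c⁆ ∈ center G) :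
    ⁅a * b, c⁆ = ⁅b, c⁆ * ⁅a, c⁆ := by
  rw [commutatorElement_mul_left_eq_conj_mul, Commute.mul_inv_cancel (mem_center_iff.1 h a)]

theorem commutatorElement_mul_right_of_mem_center {a b c : G} (h : ⁅a, c⁆ ∈ center G) :
    ⁅a, b * c⁆ = ⁅a, b⁆ * ⁅a, c⁆ := by
  rw [commutatorElement_mul_right_eq_mul_conj, mul_assoc _ b, mul_assoc _ (b * _),
    Commute.mul_inv_cancel (mem_center_iff.1 h b)]

theorem commutatorElement_inv_left_of_mem_center {a b : G} (h : ⁅a, b⁆ ∈ center G) :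
    ⁅a⁻¹, b⁆ = ⁅a, b⁆⁻¹ := by
  rw [eq_comm, inv_eq_iff_mul_eq_one, ← commutatorElement_mul_left_of_mem_center h, inv_mul_cancel,
    commutatorElement_one_left]

theorem commutatorElement_inv_right_of_mem_center {a b : G} (h : ⁅a, b⁆ ∈ center G) :
    ⁅a, b⁻¹⁆ = ⁅a, b⁆⁻¹ := by
  rw [eq_inv_iff_mul_eq_one, ← commutatorElement_mul_right_of_mem_center h, inv_mul_cancel,
    commutatorElement_one_right]

theorem Subgroup.commutator_closure_eq_closure_image2 {S T : Set G}
    (hc : ⁅closure S, closure T⁆ ≤ center G) :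
    ⁅closure S, closure T⁆ = closure (Set.image2 (⁅·, ·⁆) S T) := by
  have central {a b : G} (ha : a ∈ closure S) (hb : b ∈ closure T) : ⁅a, b⁆ ∈ center G :=
    hc (commutator_mem_commutator ha hb)
  refine le_antisymm (commutator_le.2 fun a ha b hb => ?_) ((closure_le _).2 ?_)
  · induction ha using closure_induction generalizing b with
    | mem s hs =>
      induction hb using closure_induction with
      | mem t ht => exact subset_closure (Set.mem_image2_of_mem hs ht)
      | one => simp
      | mul b c hb hc ihb ihc =>
        rw [commutatorElement_mul_right_of_mem_center (central (subset_closure hs) hc)]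
        exact mul_mem ihb ihc
      | inv b hb ihb =>
        rw [commutatorElement_inv_right_of_mem_center (central (subset_closure hs) hb)]
        exact inv_mem ihb
    | one => simp
    | mul a a' ha ha' iha iha' =>
      rw [commutatorElement_mul_left_of_mem_center (central ha' hb)]
      exact mul_mem (iha' b hb) (iha b hb)
    | inv a ha iha =>
      rw [commutatorElement_inv_left_of_mem_center (central ha hb)]
      exact inv_mem (iha b hb)
  · rintro _ ⟨s, hs, t, ht, rfl⟩
    exact commutator_mem_commutator (subset_closure hs) (subset_closure ht)

end Commutator

namespace Subgroup

variable {G Q : Type*} [Group G] [Group Q]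

theorem FG.map {H : Subgroup G} (hH : H.FG) (f : G →* Q) : (H.map f).FG := by
  obtain ⟨S, rfl, hS⟩ := (fg_iff H).1 hH
  exact (fg_iff _).2 ⟨f '' S, (MonoidHom.map_closure f S).symm, hS.image f⟩

theorem exists_finite_subset_map_closure_eq {f : G →* Q} {H : Subgroup G} (hH : (H.map f).FG) :
    ∃ S ⊆ (H : Set G), S.Finite ∧ (closure S).map f = H.map f := by
  obtain ⟨T, hT, hTfin⟩ := (fg_iff _).1 hH
  have hTH : T ⊆ f '' H := by rw [← coe_map, ← hT]; exact subset_closure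
  obtain ⟨S, hSH, hSfin, hS⟩ := Set.exists_subset_image_finite_and
    (p := fun T => closure T = H.map f) |>.1 ⟨T, hTH, hTfin, hT⟩
  exact ⟨S, hSH, hSfin, by rw [MonoidHom.map_closure, hS]⟩

theorem le_of_map_le_of_inf_ker_le {f : G →* Q} {H K : Subgroup G} (hKH : K ≤ H)
    (hmap : H.map f ≤ K.map f) (hker : H ⊓ f.ker ≤ K) : H ≤ K := by
  intro h hh
  obtain ⟨k, hk, hfk⟩ := hmap (mem_map_of_mem f hh)
  have hkh : k⁻¹ * h ∈ H ⊓ f.ker :=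
    mem_inf.2 ⟨mul_mem (inv_mem (hKH hk)) hh, by simp [hfk]⟩
  simpa using mul_mem hk (hker hkh)

theorem fg_of_fg_inf_ker_of_fg_map {f : G →* Q} {H : Subgroup G} (hker : (H ⊓ f.ker).FG)
    (hmap : (H.map f).FG) : H.FG := by
  obtain ⟨S₁, hS₁, hS₁fin⟩ := (fg_iff _).1 hker
  obtain ⟨S₂, hS₂H, hS₂fin, hS₂⟩ := exists_finite_subset_map_closure_eq hmap
  have hle : closure S₁ ⊔ closure S₂ ≤ H :=
    sup_le (hS₁.trans_le inf_le_left) ((closure_le H).2 hS₂H)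
  refine (fg_iff H).2 ⟨S₁ ∪ S₂, ?_, hS₁fin.union hS₂fin⟩
  rw [closure_union]
  refine le_antisymm hle (le_of_map_le_of_inf_ker_le (f := f) hle ?_ ?_)
  · exact hS₂ ▸ map_mono le_sup_right
  · exact hS₁ ▸ le_sup_left

theorem commutator_le_commutator_of_map_le {f : G →* Q} (hf : f.ker ≤ center G)
    {H H' K : Subgroup G} (hH : H.map f ≤ H'.map f) : ⁅H, K⁆ ≤ ⁅H', K⁆ := by
  refine commutator_le.2 fun h hh k hk => ?_
  obtain ⟨h', hh', hfh⟩ := hH (mem_map_of_mem f hh)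
  have hz : h'⁻¹ * h ∈ center G := hf (by simp [MonoidHom.mem_ker, hfh])
  have hzk : ⁅h'⁻¹ * h, k⁆ = 1 :=
    commutatorElement_eq_one_iff_mul_comm.2 (mem_center_iff.1 hz k).symm
  rw [← mul_inv_cancel_left h' h, commutatorElement_mul_left_eq_conj_mul, hzk]
  simpa using commutator_mem_commutator hh' hk

theorem commutator_fg_of_fg_map {f : G →* Q} (hf : f.ker ≤ center G) {H K : Subgroup G}
    (hH : (H.map f).FG) (hK : K.FG) (hc : ⁅H, K⁆ ≤ center G) : ⁅H, K⁆.FG := by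
  obtain ⟨S, hSH, hSfin, hS⟩ := exists_finite_subset_map_closure_eq hH
  obtain ⟨T, rfl, hTfin⟩ := (fg_iff K).1 hK
  have heq : ⁅H, closure T⁆ = ⁅closure S, closure T⁆ :=
    le_antisymm (commutator_le_commutator_of_map_le hf hS.ge)
      (commutator_mono ((closure_le H).2 hSH) le_rfl)
  rw [heq, commutator_closure_eq_closure_image2 (heq ▸ hc)]
  exact (fg_iff _).2 ⟨_, rfl, hSfin.image2 _ hTfin⟩

theorem lowerCentralSeries_le_center_of_succ_eq_bot {n : ℕ}
    (h : lowerCentralSeries (⊤ : Subgroup G) (n + 1) = ⊥) :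
    lowerCentralSeries (⊤ : Subgroup G) n ≤ center G := by
  rw [← centralizer_univ, ← coe_top]
  exact commutator_eq_bot_iff_le_centralizer.1 h

end Subgroup

namespace Group.IsNoetherian

variable {G : Type*} [Group G]

theorem of_commGroup (A : Type*) [CommGroup A] [Group.FG A] : IsNoetherian A := by
  intro H
  rw [Subgroup.fg_iff_add_fg, ← AddSubgroup.toIntSubmodule_toAddSubgroup H.toAddSubgroup,
    ← Submodule.fg_iff_addSubgroup_fg]
  exact IsNoetherian.noetherian _

theorem of_le_center {N : Subgroup G} (hN : N ≤ center G) (hfg : N.FG) : IsNoetherian N :=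
  letI : CommGroup N :=
    { mul_comm := fun a b => Subtype.ext (mem_center_iff.1 (hN b.2) a) }
  haveI : Group.FG N := (fg_iff_subgroup_fg N).2 hfg
  of_commGroup N

theorem of_quotient {N : Subgroup G} [N.Normal] (hN : IsNoetherian N)
    (hQ : IsNoetherian (G ⧸ N)) : IsNoetherian G := fun H =>
  fg_of_fg_inf_ker_of_fg_map (f := QuotientGroup.mk' N)
    (by simpa [subgroupOf_map_subtype] using (hN (H.subgroupOf N)).map N.subtype) (hQ _)

theorem exists_iSup_le_of_monotone (hG : IsNoetherian G) {K : ℕ → Subgroup G} (hK : Monotone K) :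
    ∃ N, ⨆ n, K n ≤ K N := by
  obtain ⟨S, hS, hSfin⟩ := (Subgroup.fg_iff _).1 (hG (⨆ n, K n))
  have hmem : ∀ s ∈ S, ∃ n, s ∈ K n := fun s hs =>
    (mem_iSup_of_directed hK.directed_le).1 (hS ▸ subset_closure hs)
  choose! n hn using hmem
  obtain ⟨N, hN⟩ := (hSfin.image n).bddAbove
  exact ⟨N, hS ▸ (closure_le _).2 fun s hs => hK (hN (Set.mem_image_of_mem n hs)) (hn s hs)⟩

theorem injective_of_surjective (hG : IsNoetherian G) {f : G →* G}
    (hf : Function.Surjective f) : Function.Injective f := by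
  -- `G →* G` has no power operation of its own; `Monoid.End G` supplies it.
  let g : Monoid.End G := f
  let K : ℕ → Subgroup G := fun n => (g ^ n).ker
  have mem_K {n : ℕ} {x : G} : x ∈ K n ↔ f^[n] x = 1 := Iff.rfl
  have hK : Monotone K := monotone_nat_of_le_succ fun n x hx => by
    rw [mem_K, Function.iterate_succ_apply', mem_K.1 hx, map_one]
  obtain ⟨N, hN⟩ := hG.exists_iSup_le_of_monotone hK
  refine (injective_iff_map_eq_one f).2 fun x hx => ?_
  obtain ⟨y, rfl⟩ := hf.iterate N x
  have hy : y ∈ K (N + 1) := by rwa [mem_K, Function.iterate_succ_apply']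
  exact mem_K.1 (hN (le_iSup K (N + 1) hy))

theorem of_lowerCentralSeries_eq_bot (n : ℕ) : ∀ (G : Type u) [Group G] [Group.FG G],
    (⊤ : Subgroup G).lowerCentralSeries n = ⊥ → IsNoetherian G := by
  induction n with
  | zero => exact fun G _ _ h H => le_bot_iff.1 (h ▸ le_top : H ≤ ⊥) ▸ FG.bot
  | succ n ih =>
    intro G _ _ h
    let Z := (⊤ : Subgroup G).lowerCentralSeries n
    have hZ : Z ≤ center G := lowerCentralSeries_le_center_of_succ_eq_bot h
    have hQ : IsNoetherian (G ⧸ Z) := ih _ <| by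
      rw [← map_top_of_surjective _ (QuotientGroup.mk'_surjective Z), ← map_lowerCentralSeries,
        QuotientGroup.map_mk'_self]
    refine of_quotient (of_le_center hZ ?_) hQ
    cases n with
    | zero => exact Group.FG.out
    | succ m =>
      exact commutator_fg_of_fg_map (f := QuotientGroup.mk' Z) (by rwa [QuotientGroup.ker_mk'])
        (hQ _) Group.FG.out hZ

theorem of_isNilpotent (G : Type*) [Group G] [Group.FG G] [Group.IsNilpotent G] :
    IsNoetherian G :=
  have ⟨n, hn⟩ := Subgroup.nilpotent_iff_lowerCentralSeries.1 ‹Group.IsNilpotent G›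
  of_lowerCentralSeries_eq_bot n G hn

end Group.IsNoetherian

theorem stmt_3 {G : Type*} [Group G] [Group.FG G] [Group.IsNilpotent G]
    (f : G →* G) (hf : Function.Surjective f) : Function.Injective f :=
  (Group.IsNoetherian.of_isNilpotent G).injective_of_surjective hf
end

section
/- Let G be a residually nilpotent group, let H be a group, and let ψ : G → H be a surjective homomorphism with nontrivial kernel such that G/γ_i(G) is isomorphic to H/γ_i(H) for all i and these quotients are finitely generated nilpotent. Then a contradiction follows; i.e., no such ψ exists. Equivalently: if G is residually nilpotent, H is a quotient of G by a nontrivial normal subgroup, and all lower central quotients of G and H are isomorphic finitely generated groups, this is impossible. -/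
/-!
Take `x ≠ 1` in `ker ψ`; by residual nilpotence `x ∉ γ_i G` for some `i`. Then `ψ` induces a
surjection `G/γ_i G → H/γ_i H ≅ G/γ_i G` that kills the image of `x`. But finitely generated
nilpotent groups are Hopfian: the kernel `k` of a surjective endomorphism `φ` of such a group `K`
lies in every `γ_j K`, since if `k ⊆ γ_j K` then `φ` induces a surjective endomorphism of the
central subgroup `γ_j (K/γ_{j+1} K)`, which is finitely generated abelian and so Hopfian
(a Noetherian `ℤ`-module). That subgroup is finitely generated because, modulo `γ_{j+1}`, the
term `γ_j` is generated by the commutators of generators of `γ_{j-1}` with generators of `K`.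
-/

open Subgroup
open scoped commutatorElement

namespace Subgroup

variable {Q K : Type*} [Group Q] [Group K]

theorem map_top_lowerCentralSeries_of_surjective (f : Q →* K) (hf : Function.Surjective f)
    (n : ℕ) :
    ((⊤ : Subgroup Q).lowerCentralSeries n).map f = (⊤ : Subgroup K).lowerCentralSeries n := by
  rw [map_lowerCentralSeries, map_top_of_surjective f hf]

theorem top_lowerCentralSeries_quotient_self (n : ℕ) :
    (⊤ : Subgroup (Q ⧸ (⊤ : Subgroup Q).lowerCentralSeries n)).lowerCentralSeries n =
      ⊥ := by
  rw [← map_top_lowerCentralSeries_of_surjective _ (QuotientGroup.mk'_surjective _)]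
  exact QuotientGroup.map_mk'_self _

theorem top_lowerCentralSeries_le_center_of_succ_eq_bot {n : ℕ}
    (h : (⊤ : Subgroup Q).lowerCentralSeries (n + 1) = ⊥) :
    (⊤ : Subgroup Q).lowerCentralSeries n ≤ center Q := fun _ hy =>
  mem_center_iff.2 fun g => (commutatorElement_eq_one_iff_mul_comm.1 <|
    (mem_bot.1 <| h ▸ commutator_mem_commutator hy (mem_top g))).symm

end Subgroup

section CentralCommutators

variable {Q : Type*} [Group Q]

def commutatorElementRightHom (y : Q) (hy : ∀ g, ⁅y, g⁆ ∈ center Q) : Q →* Q where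
  toFun g := ⁅y, g⁆
  map_one' := commutatorElement_one_right y
  map_mul' g h := by
    rw [commutatorElement_mul_right_eq_mul_conj, mul_assoc _ g, mem_center_iff.1 (hy h) g,
      ← mul_assoc, mul_inv_cancel_right]

def commutatorElementLeftHom (N : Subgroup Q) (g : Q) (hg : ∀ y ∈ N, ⁅y, g⁆ ∈ center Q) :
    N →* Q where
  toFun y := ⁅(y : Q), g⁆
  map_one' := commutatorElement_one_left g
  map_mul' a b := by
    rw [coe_mul, commutatorElement_mul_left_eq_conj_mul, mem_center_iff.1 (hg b b.2) a,
      mul_inv_cancel_right, mem_center_iff.1 (hg b b.2)]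

theorem commutator_top_le_closure_image2 {N : Subgroup Q} (hN : ⁅N, ⊤⁆ ≤ center Q)
    {T S : Set Q} (hT : closure T ⊔ ⁅N, ⊤⁆ = N) (hS : closure S = ⊤) :
    ⁅N, ⊤⁆ ≤ closure (Set.image2 (⁅·, ·⁆) T S) := by
  -- central commutators are multiplicative in each slot, so generators suffice in each slot
  set M := closure (Set.image2 (⁅·, ·⁆) T S)
  have hcentral : ∀ y ∈ N, ∀ g, ⁅y, g⁆ ∈ center Q := fun y hy g =>
    hN (commutator_mem_commutator hy (mem_top g))
  have hTN : T ⊆ N := fun t ht => hT.le (mem_sup_left (subset_closure ht))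
  have hTM : ∀ t ∈ T, ∀ g, ⁅t, g⁆ ∈ M := by
    intro t ht g
    have : closure S ≤ M.comap (commutatorElementRightHom t (hcentral t (hTN ht))) :=
      (closure_le _).2 fun s hs => subset_closure (Set.mem_image2_of_mem ht hs)
    exact (hS ▸ this) (mem_top g)
  refine commutator_le.2 fun y hy g _ => ?_
  have hNM : N ≤ (M.comap (commutatorElementLeftHom N g fun y hy => hcentral y hy g)).map
      N.subtype := by
    refine hT.symm.le.trans <|
      sup_le ((closure_le _).2 fun t ht => ⟨⟨t, hTN ht⟩, hTM t ht g, rfl⟩) fun z hz => ?_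
    refine ⟨⟨z, hT ▸ mem_sup_right hz⟩, ?_, rfl⟩
    show ⁅z, g⁆ ∈ M
    rw [commutatorElement_eq_one_iff_mul_comm.2 (mem_center_iff.1 (hN hz) g).symm]
    exact M.one_mem
  obtain ⟨⟨y', _⟩, hy', rfl⟩ := hNM hy
  exact hy'

end CentralCommutators

theorem Group.exists_finite_closure_sup_lowerCentralSeries_succ (K : Type*) [Group K]
    [Group.FG K] (n : ℕ) : ∃ T : Set K, T.Finite ∧
      closure T ⊔ (⊤ : Subgroup K).lowerCentralSeries (n + 1) =
        (⊤ : Subgroup K).lowerCentralSeries n := by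
  obtain ⟨S, hS, hSfin⟩ := Group.fg_iff.1 ‹_›
  induction n with
  | zero => exact ⟨S, hSfin, by rw [hS, top_sup_eq, Subgroup.lowerCentralSeries_zero]⟩
  | succ n ih =>
    obtain ⟨T, hTfin, hT⟩ := ih
    refine ⟨Set.image2 (⁅·, ·⁆) T S, hTfin.image2 _ hSfin, le_antisymm ?_ ?_⟩
    · refine sup_le ((closure_le _).2 ?_)
        (Subgroup.lowerCentralSeries_antitone _ (n + 1).le_succ)
      rintro _ ⟨t, ht, s, -, rfl⟩
      exact commutator_mem_commutator (hT.le (mem_sup_left (subset_closure ht))) (mem_top s)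
    -- modulo `γ_{n+2}` the subgroup `γ_{n+1}` is central
    let p := QuotientGroup.mk' ((⊤ : Subgroup K).lowerCentralSeries (n + 2))
    have hp := QuotientGroup.mk'_surjective ((⊤ : Subgroup K).lowerCentralSeries (n + 2))
    rw [← QuotientGroup.ker_mk' ((⊤ : Subgroup K).lowerCentralSeries (n + 2)),
      ← Subgroup.map_le_map_iff, map_top_lowerCentralSeries_of_surjective p hp,
      MonoidHom.map_closure, Set.image_image2_distrib (map_commutatorElement p)]
    refine commutator_top_le_closure_image2
      (top_lowerCentralSeries_le_center_of_succ_eq_bot (top_lowerCentralSeries_quotient_self _))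
      ?_ ?_
    · rw [← MonoidHom.map_closure, ← Subgroup.lowerCentralSeries_succ,
        ← map_top_lowerCentralSeries_of_surjective p hp,
        ← map_top_lowerCentralSeries_of_surjective p hp, ← Subgroup.map_sup, hT]
    · rw [← MonoidHom.map_closure, hS, map_top_of_surjective p hp]

theorem CommGroup.injective_of_surjective {B : Type*} [CommGroup B] [Group.FG B] (f : B →* B)
    (hf : Function.Surjective f) : Function.Injective f := by
  have : Module.Finite ℤ (Additive B) := Module.Finite.iff_addGroup_fg.2 inferInstance
  exact IsNoetherian.injective_of_surjective_endomorphism f.toAdditive.toIntLinearMap hf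

theorem Subgroup.injOn_of_map_eq_self {Q : Type*} [Group Q] {A : Subgroup Q} [Group.FG A]
    (hA : A ≤ center Q) (f : Q →* Q) (hf : A.map f = A) : Set.InjOn f A := by
  let : CommGroup A :=
    { A.toGroup with mul_comm := fun a b => Subtype.ext (mem_center_iff.1 (hA b.2) a) }
  let fA : A →* A := (MulEquiv.subgroupCongr hf).toMonoidHom.comp (f.subgroupMap A)
  have hfA : Function.Injective fA := CommGroup.injective_of_surjective fA <|
    (MulEquiv.subgroupCongr hf).surjective.comp (f.subgroupMap_surjective A)
  intro x hx y hy hxy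
  exact congrArg Subtype.val (@hfA ⟨x, hx⟩ ⟨y, hy⟩ (Subtype.ext hxy))

theorem Group.IsNilpotent.injective_of_surjective {K : Type*} [Group K] [Group.FG K]
    [Group.IsNilpotent K] (φ : K →* K) (hφ : Function.Surjective φ) :
    Function.Injective φ := by
  obtain ⟨n, hn⟩ := Subgroup.nilpotent_iff_lowerCentralSeries.1 ‹_›
  suffices h : ∀ j, φ.ker ≤ (⊤ : Subgroup K).lowerCentralSeries j by
    rw [← MonoidHom.ker_eq_bot_iff, ← le_bot_iff, ← hn]
    exact h n
  intro j
  induction j with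
  | zero => exact le_top
  | succ j ih =>
    intro x hx
    set N := (⊤ : Subgroup K).lowerCentralSeries (j + 1)
    have hp := QuotientGroup.mk'_surjective N
    have hφN : N ≤ N.comap φ :=
      map_le_iff_le_comap.1 (map_top_lowerCentralSeries_of_surjective φ hφ _).le
    let φN := QuotientGroup.map N N φ hφN
    have hφN_surj : Function.Surjective φN :=
      QuotientGroup.map_surjective_of_surjective N N φ (hp.comp hφ) hφN
    obtain ⟨T, hTfin, hT⟩ := exists_finite_closure_sup_lowerCentralSeries_succ (K ⧸ N) j
    rw [top_lowerCentralSeries_quotient_self, sup_bot_eq] at hT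
    have : Group.FG ((⊤ : Subgroup (K ⧸ N)).lowerCentralSeries j) := by
      rw [← hT]
      have := hTfin.to_subtype
      infer_instance
    have hpx : (x : K ⧸ N) ∈ (⊤ : Subgroup (K ⧸ N)).lowerCentralSeries j := by
      rw [← map_top_lowerCentralSeries_of_surjective _ hp]
      exact mem_map_of_mem _ (ih hx)
    have hφx : φN x = φN 1 := by
      rw [QuotientGroup.map_mk, MonoidHom.mem_ker.1 hx, map_one, QuotientGroup.mk_one]
    have := injOn_of_map_eq_self
      (top_lowerCentralSeries_le_center_of_succ_eq_bot (top_lowerCentralSeries_quotient_self _))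
      φN (map_top_lowerCentralSeries_of_surjective φN hφN_surj j) hpx (one_mem _) hφx
    exact (QuotientGroup.eq_one_iff x).1 this

theorem stmt_5 {G H : Type*} [Group G] [Group H] [Group.FG G]
    (hres : ⨅ i : ℕ, (⊤ : Subgroup G).lowerCentralSeries i = ⊥)
    (ψ : G →* H) (hsurj : Function.Surjective ψ) (hker : ψ.ker ≠ ⊥)
    (hiso : ∀ i : ℕ, Nonempty
      ((G ⧸ (⊤ : Subgroup G).lowerCentralSeries i) ≃* (H ⧸ (⊤ : Subgroup H).lowerCentralSeries i))) :
    False := by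
  obtain ⟨x, hxker, hx1⟩ := (bot_or_exists_ne_one ψ.ker).resolve_left hker
  obtain ⟨i, hxi⟩ : ∃ i, x ∉ (⊤ : Subgroup G).lowerCentralSeries i := by
    by_contra! h
    exact hx1 (mem_bot.1 (hres ▸ mem_iInf.2 h))
  obtain ⟨e⟩ := hiso i
  have hψi := map_le_iff_le_comap.1 (map_top_lowerCentralSeries_of_surjective ψ hsurj i).le
  let φ := e.symm.toMonoidHom.comp (QuotientGroup.map _ _ ψ hψi)
  have hφ : Function.Surjective φ := e.symm.surjective.comp <|
    QuotientGroup.map_surjective_of_surjective _ _ ψ ((QuotientGroup.mk'_surjective _).comp hsurj)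
      hψi
  have : Group.IsNilpotent (G ⧸ (⊤ : Subgroup G).lowerCentralSeries i) :=
    Subgroup.nilpotent_iff_lowerCentralSeries.2 ⟨i, top_lowerCentralSeries_quotient_self i⟩
  refine hxi ((QuotientGroup.eq_one_iff x).1 (Group.IsNilpotent.injective_of_surjective φ hφ ?_))
  simp [φ, MonoidHom.mem_ker.1 hxker]
end

section
/- Let F₂ be the free group on generators a, b, and let β = [a,b] = aba⁻¹b⁻¹. If y ∈ F₂ and n ≥ 1 satisfy yⁿ = β, then n = 1. -/
/-! The substitution `a ↦ (1,0,0)`, `b ↦ (0,1,0)` maps `[a,b]` to the central element `(0,0,1)`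
of the integral Heisenberg group `{(x,y,z)}` with `(x,y,z)(x',y',z') = (x+x', y+y', z+z'+xy')`.
There `g ^ n = (nx, ny, nz + (n choose 2)xy)`, so `g ^ n = (0,0,1)` forces `n ≠ 0`, hence `x = 0`,
and then `nz = 1`, i.e. `n = 1`. -/

open scoped commutatorElement

@[ext]
structure Heisenberg (R : Type*) where
  x : R
  y : R
  z : R

namespace Heisenberg

variable {R : Type*} [CommRing R]

instance : Mul (Heisenberg R) := ⟨fun a b => ⟨a.x + b.x, a.y + b.y, a.z + b.z + a.x * b.y⟩⟩
instance : One (Heisenberg R) := ⟨⟨0, 0, 0⟩⟩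
instance : Inv (Heisenberg R) := ⟨fun a => ⟨-a.x, -a.y, a.x * a.y - a.z⟩⟩

lemma mul_def (a b : Heisenberg R) :
    a * b = ⟨a.x + b.x, a.y + b.y, a.z + b.z + a.x * b.y⟩ := rfl

lemma one_def : (1 : Heisenberg R) = ⟨0, 0, 0⟩ := rfl

lemma inv_def (a : Heisenberg R) : a⁻¹ = ⟨-a.x, -a.y, a.x * a.y - a.z⟩ := rfl

instance : Group (Heisenberg R) where
  mul_assoc a b c := by ext <;> simp only [mul_def] <;> ring
  one_mul a := by ext <;> simp [mul_def, one_def]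
  mul_one a := by ext <;> simp [mul_def, one_def]
  inv_mul_cancel a := by ext <;> simp only [mul_def, inv_def, one_def] <;> ring

lemma pow_def (a : Heisenberg R) (k : ℕ) :
    a ^ k = ⟨k * a.x, k * a.y, k * a.z + k.choose 2 * a.x * a.y⟩ := by
  induction k with
  | zero => simp [one_def]
  | succ k ih =>
    rw [pow_succ, ih, mul_def, Nat.choose_succ_succ', Nat.choose_one_right]
    ext <;> push_cast <;> ring

lemma commutator_x_y :
    ⁅(⟨1, 0, 0⟩ : Heisenberg R), (⟨0, 1, 0⟩ : Heisenberg R)⁆ = ⟨0, 0, 1⟩ := by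
  simp [commutatorElement_def, mul_def, inv_def]

lemma eq_one_of_pow_eq_center (g : Heisenberg ℤ) {n : ℕ} (h : g ^ n = ⟨0, 0, 1⟩) : n = 1 := by
  rw [pow_def, Heisenberg.mk.injEq] at h
  obtain ⟨hx, -, hz⟩ := h
  rcases mul_eq_zero.mp hx with hn | hx
  · simp [Nat.cast_eq_zero.mp hn] at hz
  · rw [hx, mul_zero, zero_mul, add_zero] at hz
    exact_mod_cast Int.eq_one_of_mul_eq_one_right n.cast_nonneg hz

end Heisenberg

theorem stmt_6_general (y : FreeGroup (Fin 2)) (n : ℕ)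
    (h : y ^ n = ⁅FreeGroup.of (0 : Fin 2), FreeGroup.of (1 : Fin 2)⁆) :
    n = 1 := by
  let f : FreeGroup (Fin 2) →* Heisenberg ℤ := FreeGroup.lift ![⟨1, 0, 0⟩, ⟨0, 1, 0⟩]
  apply (f y).eq_one_of_pow_eq_center
  rw [← map_pow, h, map_commutatorElement]
  simpa [f] using Heisenberg.commutator_x_y

theorem stmt_6 (y : FreeGroup (Fin 2)) (n : ℕ) (hn : 1 ≤ n)
    (h : y ^ n = ⁅FreeGroup.of (0 : Fin 2), FreeGroup.of (1 : Fin 2)⁆) :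
    n = 1 :=
  stmt_6_general y n h
end

section
/- Let F₄ be the free group on a, b, c, d, let w = [a,b][c,d], and let F_{4,i} = F₄/γ_i(F₄). Then for every i, the normal closure of the image of w·[w, bwb⁻¹] in F_{4,i} equals the normal closure of the image of w in F_{4,i}. -/
/-!
Let `N` be the normal closure of `w` in a nilpotent group. Since `[w, bwb⁻¹] ∈ [N, N]`, the normal
closure `M` of `w·[w, bwb⁻¹]` satisfies `M ≤ N` and `M·[N, N] = N`. The nilpotent group `N / M`
is then perfect, hence trivial. The quotients `F₄ / γᵢ(F₄)` are nilpotent.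
-/

namespace Subgroup

variable {G : Type*} [Group G]

instance isNilpotent_quotient_lowerCentralSeries (n : ℕ) :
    Group.IsNilpotent (G ⧸ (⊤ : Subgroup G).lowerCentralSeries n) := by
  refine nilpotent_iff_lowerCentralSeries.mpr ⟨n, ?_⟩
  rw [← map_top_of_surjective _ (QuotientGroup.mk'_surjective _), ← map_lowerCentralSeries,
    map_eq_bot_iff, QuotientGroup.ker_mk']

theorem eq_top_of_sup_commutator_eq_top [Group.IsNilpotent G] (H : Subgroup G) [H.Normal]
    (h : H ⊔ _root_.commutator G = ⊤) : H = ⊤ := by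
  have : Group.IsPerfect (G ⧸ H) := by
    have hker : H.map (QuotientGroup.mk' H) = ⊥ :=
      (map_eq_bot_iff _).mpr (QuotientGroup.ker_mk' H).ge
    rw [Group.isPerfect_def, _root_.commutator_def,
      ← map_top_of_surjective _ (QuotientGroup.mk'_surjective H), ← map_commutator,
      ← _root_.commutator_def, ← bot_sup_eq (map _ _), ← hker, ← map_sup, h]
  exact QuotientGroup.subgroup_eq_top_of_subsingleton H <| not_nontrivial_iff_subsingleton.mp
    fun _ ↦ Group.IsPerfect.not_isNilpotent (G ⧸ H) inferInstance

theorem eq_of_le_of_sup_commutator_eq [Group.IsNilpotent G] {K N : Subgroup G} [K.Normal]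
    (hKN : K ≤ N) (h : K ⊔ ⁅N, N⁆ = N) : K = N := by
  have : (K.subgroupOf N).Normal := ‹K.Normal›.subgroupOf N
  have hsup : K.subgroupOf N ⊔ _root_.commutator N = ⊤ := by
    apply map_injective N.subtype_injective
    rw [map_sup, subgroupOf_map_subtype, map_subtype_commutator,
      ← MonoidHom.range_eq_map, range_subtype, inf_of_le_left hKN, h]
  exact le_antisymm hKN (subgroupOf_eq_top.mp (eq_top_of_sup_commutator_eq_top _ hsup))

theorem normalClosure_mul_eq_of_mem_commutator [Group.IsNilpotent G] {g h : G}
    (hh : h ∈ ⁅normalClosure {g}, normalClosure {g}⁆) :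
    normalClosure {g * h} = normalClosure {g} := by
  set N := normalClosure {g}
  have hgN : g ∈ N := subset_normalClosure rfl
  have hhN : h ∈ N := commutator_le_left N N hh
  have hle : normalClosure {g * h} ≤ N :=
    normalClosure_le_normal (Set.singleton_subset_iff.mpr (N.mul_mem hgN hhN))
  refine eq_of_le_of_sup_commutator_eq hle (le_antisymm (sup_le hle (commutator_le_left N N)) ?_)
  refine normalClosure_le_normal (Set.singleton_subset_iff.mpr ?_)
  -- `g = (g * h) * h⁻¹`
  simpa using mul_mem (mem_sup_left (subset_normalClosure (Set.mem_singleton (g * h))))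
    (mem_sup_right (inv_mem hh))

end Subgroup

open scoped commutatorElement in
theorem stmt_17 (i : ℕ) :
    let a : FreeGroup (Fin 4) := FreeGroup.of 0
    let b : FreeGroup (Fin 4) := FreeGroup.of 1
    let c : FreeGroup (Fin 4) := FreeGroup.of 2
    let d : FreeGroup (Fin 4) := FreeGroup.of 3
    let w := ⁅a, b⁆ * ⁅c, d⁆
    Subgroup.normalClosure
        {(QuotientGroup.mk (w * ⁅w, b * w * b⁻¹⁆) :
          FreeGroup (Fin 4) ⧸ (⊤ : Subgroup (FreeGroup (Fin 4))).lowerCentralSeries i)} =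
      Subgroup.normalClosure
        {(QuotientGroup.mk w :
          FreeGroup (Fin 4) ⧸ (⊤ : Subgroup (FreeGroup (Fin 4))).lowerCentralSeries i)} := by
  intro a b c d w
  set Q := FreeGroup (Fin 4) ⧸ (⊤ : Subgroup (FreeGroup (Fin 4))).lowerCentralSeries i
  have hmk : ((w * ⁅w, b * w * b⁻¹⁆ : FreeGroup (Fin 4)) : Q) =
      (w : Q) * ⁅(w : Q), b * w * (b : Q)⁻¹⁆ := by
    simp only [commutatorElement_def, QuotientGroup.mk_mul, QuotientGroup.mk_inv]
  have hw : (w : Q) ∈ Subgroup.normalClosure {(w : Q)} := Subgroup.subset_normalClosure rfl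
  rw [hmk]
  exact Subgroup.normalClosure_mul_eq_of_mem_commutator
    (Subgroup.commutator_mem_commutator hw (Subgroup.normalClosure_normal.conj_mem _ hw b))
end
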